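/- If a vector field b on a bounded open set Ω ⊂ ℝⁿ satisfies δ(x)^{1-β}|b(x)| ∈ L^∞(Ω) for some β ∈ (0,1), then the measure |b|² m belongs to the Morrey space M^{n/(2-2β)}(Ω), i.e. ∫_{B(x,r)} |b|² dm ≤ C r^{n-2+2β} for all x ∈ Ω and 0 < r < δ(x)/2. -/

import Mathlib

open MeasureTheory Metric Set Filter
open scoped ENNReal NNReal Topology

noncomputable section

abbrev Euc (n : ℕ) := EuclideanSpace ℝ (Fin n)

/-- The Morrey norm `⫴ν⫴_{q,Ω}` of a measure. -/
def mNorm (n : ℕ) (Ω : Set (Euc n)) (q : ℝ) (ν : Measure (Euc n)) : ℝ≥0∞ :=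
  ENNReal.ofReal (diam Ω ^ (2 - (n : ℝ) / q)) *
    ⨆ (x : Euc n) (_ : x ∈ Ω) (r : ℝ) (_ : 0 < r) (_ : r < infDist x Ωᶜ / 2),
      ENNReal.ofReal (r ^ ((n : ℝ) / q - n)) * ν (ball x r)

/-- Test functions: smooth, compactly supported in `Ω`. -/
def IsTest (n : ℕ) (Ω : Set (Euc n)) (φ : Euc n → ℝ) : Prop :=
  ContDiff ℝ (⊤ : ℕ∞) φ ∧ HasCompactSupport φ ∧ tsupport φ ⊆ Ω

/-- `Du` is the distributional (weak) gradient of `u` on `Ω`. -/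
def IsWeakGrad (n : ℕ) (Ω : Set (Euc n)) (u : Euc n → ℝ) (Du : Euc n → Euc n) : Prop :=
  ∀ φ : Euc n → ℝ, IsTest n Ω φ →
    ∫ y in Ω, u y • gradient φ y = - ∫ y in Ω, φ y • Du y

/-- `Du ∈ L²_loc(Ω)` : local square integrability of the gradient. -/
def GradL2loc (n : ℕ) (Ω : Set (Euc n)) (Du : Euc n → Euc n) : Prop :=
  ∀ x ∈ Ω, ∃ r > (0:ℝ), (∫⁻ y in ball x r, ENNReal.ofReal (‖Du y‖ ^ 2)) < ⊤

/-- Uniform ellipticity `|ξ|² ≤ A(x)ξ·ξ ≤ L|ξ|²`. -/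
def Elliptic (n : ℕ) (Ω : Set (Euc n)) (L : ℝ) (A : Euc n → (Euc n →L[ℝ] Euc n)) : Prop :=
  ∀ x ∈ Ω, ∀ ξ : Euc n, ‖ξ‖ ^ 2 ≤ (inner ℝ (A x ξ) ξ : ℝ) ∧ (inner ℝ (A x ξ) ξ : ℝ) ≤ L * ‖ξ‖ ^ 2

/-- Variational capacity `cap(K, U)`. -/
def cap (n : ℕ) (U K : Set (Euc n)) : ℝ≥0∞ :=
  ⨅ (φ : Euc n → ℝ) (_ : ContDiff ℝ (⊤ : ℕ∞) φ) (_ : HasCompactSupport φ)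
    (_ : tsupport φ ⊆ U) (_ : ∀ x ∈ K, 1 ≤ φ x),
      ∫⁻ x, ENNReal.ofReal (‖gradient φ x‖ ^ 2)

/-- Capacity density condition with constant `γ`. -/
def CDC (n : ℕ) (Ω : Set (Euc n)) (γ : ℝ) : Prop :=
  ∀ ξ ∈ frontier Ω, ∀ R > (0:ℝ),
    ENNReal.ofReal γ * cap n (ball ξ (2 * R)) (closure (ball ξ R)) ≤
      cap n (ball ξ (2 * R)) (closure (ball ξ R) \ Ω)


/-- if a vector field `b` on a bounded open `Ω` satisfies
`δ(x)^{1-β}|b(x)| ∈ L^∞(Ω)` (i.e. `‖b x‖ ≤ K δ(x)^{β-1}`) for some `β ∈ (0,1)`,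
then `|b|² m ∈ M^{n/(2-2β)}(Ω)`:
`∫_{B(x,r)} |b|² dm ≤ C r^{n-2+2β}` for `x ∈ Ω`, `0 < r < δ(x)/2`. -/
theorem dist_power_drift_in_morrey (n : ℕ) (β K : ℝ) (hβ : β ∈ Ioo (0:ℝ) 1)
    (hK : 0 ≤ K) :
    ∃ C : ℝ, 0 < C ∧
      ∀ (Ω : Set (Euc n)), IsOpen Ω → Bornology.IsBounded Ω → Ω.Nonempty →
        ∀ b : Euc n → Euc n,
          (∀ x ∈ Ω, ‖b x‖ ≤ K * infDist x Ωᶜ ^ (β - 1)) →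
          (∀ x ∈ Ω, ∀ r : ℝ, 0 < r → r < infDist x Ωᶜ / 2 →
              (∫⁻ y in ball x r, ENNReal.ofReal (‖b y‖ ^ 2) ∂(volume.restrict Ω)) ≤
                ENNReal.ofReal (C * r ^ ((n : ℝ) - 2 + 2 * β))) ∧
            mNorm n Ω ((n : ℝ) / (2 - 2 * β))
              ((volume.restrict Ω).withDensity fun y => ENNReal.ofReal (‖b y‖ ^ 2)) < ⊤ := by
  obtain ⟨hβ0, hβ1⟩ := hβ
  set V : ℝ := (volume (ball (0:Euc n) 1)).toReal with hVdef
  have hV0 : 0 ≤ V := ENNReal.toReal_nonneg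
  set C : ℝ := K ^ 2 * V + 1 with hCdef
  have hC0 : 0 < C := by positivity
  refine ⟨C, hC0, ?_⟩
  intro Ω hΩo hΩb hΩne b hb
  have key : ∀ x ∈ Ω, ∀ r : ℝ, 0 < r → r < infDist x Ωᶜ / 2 →
      (∫⁻ y in ball x r, ENNReal.ofReal (‖b y‖ ^ 2) ∂(volume.restrict Ω)) ≤
        ENNReal.ofReal (C * r ^ ((n : ℝ) - 2 + 2 * β)) := by
    intro x hx r hr hr2
    have hrpow : (r ^ (β - 1)) ^ 2 = r ^ (2 * β - 2) := by
      rw [show (2 * β - 2 : ℝ) = (β - 1) * 2 by ring, Real.rpow_mul hr.le,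
        Real.rpow_two]
    have hbound : ∀ y ∈ ball x r ∩ Ω,
        ENNReal.ofReal (‖b y‖ ^ 2) ≤ ENNReal.ofReal (K ^ 2 * r ^ (2 * β - 2)) := by
      intro y ⟨hyb, hyΩ⟩
      have hdy : dist x y < r := by rw [dist_comm]; exact mem_ball.mp hyb
      have h1 : infDist x Ωᶜ ≤ infDist y Ωᶜ + dist x y := infDist_le_infDist_add_dist
      have hry : r ≤ infDist y Ωᶜ := by linarith
      have h2 : infDist y Ωᶜ ^ (β - 1) ≤ r ^ (β - 1) :=
        Real.rpow_le_rpow_of_nonpos hr hry (by linarith)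
      have h3 : ‖b y‖ ≤ K * r ^ (β - 1) :=
        (hb y hyΩ).trans (mul_le_mul_of_nonneg_left h2 hK)
      have h4 : ‖b y‖ ^ 2 ≤ K ^ 2 * r ^ (2 * β - 2) := by
        calc ‖b y‖ ^ 2 ≤ (K * r ^ (β - 1)) ^ 2 := pow_le_pow_left₀ (norm_nonneg _) h3 2
        _ = K ^ 2 * r ^ (2 * β - 2) := by rw [mul_pow, hrpow]
      exact ENNReal.ofReal_le_ofReal h4
    have hfin : volume (ball (0:Euc n) 1) ≠ ⊤ := measure_ball_lt_top.ne
    have hvol : volume (ball x r) = ENNReal.ofReal (r ^ n) * ENNReal.ofReal V := by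
      rw [Measure.addHaar_ball_of_pos volume x hr, finrank_euclideanSpace_fin,
        hVdef, ENNReal.ofReal_toReal hfin]
    calc (∫⁻ y in ball x r, ENNReal.ofReal (‖b y‖ ^ 2) ∂(volume.restrict Ω))
        = ∫⁻ y in ball x r ∩ Ω, ENNReal.ofReal (‖b y‖ ^ 2) := by
          rw [Measure.restrict_restrict measurableSet_ball]
      _ ≤ ∫⁻ _ in ball x r ∩ Ω, ENNReal.ofReal (K ^ 2 * r ^ (2 * β - 2)) :=
          setLIntegral_mono' (measurableSet_ball.inter hΩo.measurableSet) hbound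
      _ = ENNReal.ofReal (K ^ 2 * r ^ (2 * β - 2)) * volume (ball x r ∩ Ω) :=
          setLIntegral_const _ _
      _ ≤ ENNReal.ofReal (K ^ 2 * r ^ (2 * β - 2)) * volume (ball x r) :=
          mul_le_mul_right (measure_mono inter_subset_left) _
      _ = ENNReal.ofReal (K ^ 2 * r ^ (2 * β - 2) * (r ^ n * V)) := by
          rw [hvol, ← ENNReal.ofReal_mul (by positivity), ← ENNReal.ofReal_mul (by positivity),
            mul_assoc]
      _ ≤ ENNReal.ofReal (C * r ^ ((n : ℝ) - 2 + 2 * β)) := by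
          apply ENNReal.ofReal_le_ofReal
          have hmul : r ^ (2 * β - 2) * r ^ ((n:ℕ):ℝ) = r ^ ((n:ℝ) - 2 + 2 * β) := by
            rw [← Real.rpow_add hr]; congr 1; ring
          calc K ^ 2 * r ^ (2 * β - 2) * (r ^ n * V)
              = K ^ 2 * V * (r ^ (2 * β - 2) * r ^ ((n:ℕ):ℝ)) := by
                rw [Real.rpow_natCast r n]; ring
            _ = K ^ 2 * V * r ^ ((n:ℝ) - 2 + 2 * β) := by rw [hmul]
            _ ≤ C * r ^ ((n:ℝ) - 2 + 2 * β) := by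
                have : (0:ℝ) ≤ r ^ ((n:ℝ) - 2 + 2 * β) := Real.rpow_nonneg hr.le _
                nlinarith
  refine ⟨key, ?_⟩
  have hS : (⨆ (x : Euc n) (_ : x ∈ Ω) (r : ℝ) (_ : 0 < r) (_ : r < infDist x Ωᶜ / 2),
      ENNReal.ofReal (r ^ ((n : ℝ) / ((n:ℝ)/(2-2*β)) - n)) *
        ((volume.restrict Ω).withDensity fun y => ENNReal.ofReal (‖b y‖ ^ 2)) (ball x r))
      ≤ ENNReal.ofReal C := by
    refine iSup_le fun x => iSup_le fun hx => iSup_le fun r => iSup_le fun hr =>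
      iSup_le fun hr2 => ?_
    rcases Nat.eq_zero_or_pos n with h0 | hn
    · exfalso
      subst h0
      haveI : Subsingleton (Euc 0) := ⟨fun a b => PiLp.ext fun i => i.elim0⟩
      have hcompl : Ωᶜ = (∅ : Set (Euc 0)) := by
        ext y
        have hyx : y = x := Subsingleton.elim y x
        subst hyx
        simp [hx]
      rw [hcompl, infDist_empty] at hr2
      linarith
    · have hn0 : (n:ℝ) ≠ 0 := Nat.cast_ne_zero.mpr hn.ne'
      have h2β : (2:ℝ) - 2*β ≠ 0 := by linarith
      have hq : (n:ℝ) / ((n:ℝ)/(2-2*β)) - n = -((n:ℝ) - 2 + 2*β) := by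
        field_simp
        ring
      have hone : r ^ (-((n:ℝ)-2+2*β)) * (C * r ^ ((n:ℝ)-2+2*β)) = C := by
        rw [mul_comm C, ← mul_assoc, ← Real.rpow_add hr, neg_add_cancel,
          Real.rpow_zero, one_mul]
      rw [withDensity_apply _ measurableSet_ball, hq]
      calc ENNReal.ofReal (r ^ (-((n:ℝ)-2+2*β))) *
            (∫⁻ y in ball x r, ENNReal.ofReal (‖b y‖ ^ 2) ∂(volume.restrict Ω))
          ≤ ENNReal.ofReal (r ^ (-((n:ℝ)-2+2*β))) *
              ENNReal.ofReal (C * r ^ ((n:ℝ)-2+2*β)) :=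
            mul_le_mul_right (key x hx r hr hr2) _
        _ = ENNReal.ofReal C := by
            rw [← ENNReal.ofReal_mul (Real.rpow_nonneg hr.le _), hone]
  unfold mNorm
  exact lt_of_le_of_lt (mul_le_mul_right hS _)
    (ENNReal.mul_lt_top ENNReal.ofReal_lt_top ENNReal.ofReal_lt_top)
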